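/- arXiv:2303.09204 — 2 statements merged into one kernel-verified Lean document; each statement's English description precedes it below -/
import Mathlib

section
/- Let f, g ∈ ℤ[x] be monic of the same degree whose roots can be put in a bijection such that corresponding roots differ by a (rational) integer and have equal multiplicities. Then there exists n₀ ∈ ℕ and a rational function r ∈ ℚ(x) such that ∏_{k=1}^n g(k)/f(k) = r(n) for all n ≥ n₀, where f has no non-negative integer roots and g has no positive integer roots. -/
/-!
Over `ℂ` the root pairing factors the product as `∏_{(α, c) ∈ T} ∏_{k=1}^n (k - α - c) / (k - α)`.
Each inner product telescopes against the falling factorial `D_m(x) = x (x - 1) ⋯ (x - m + 1)`: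
it equals `D_m(-α) / D_m(n - α)` for `c = m ≥ 0` and `D_m(n + m - α) / D_m(m - α)` for `c = -m`,
where only `α ∉ {1, 2, …}` is needed. So the product agrees with a complex rational function
`P(n) / Q(n)` for large `n`. Its values `u(n)` being rational, applying coefficientwise to
`u(n) Q(n) = P(n)` a `ℚ`-linear functional `φ : ℂ → ℚ` with `φ (Q.leadingCoeff) = 1` gives a
representation over `ℚ`.
-/

open Polynomial Finset Filter

namespace Polynomial

variable {K L : Type*}

noncomputable def mapLinear [CommSemiring K] [Semiring L] [Algebra K L] (φ : L →ₗ[K] K)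
    (p : L[X]) : K[X] :=
  ∑ i ∈ p.support, monomial i (φ (p.coeff i))

section mapLinear

variable [CommSemiring K] [Semiring L] [Algebra K L] (φ : L →ₗ[K] K) (p : L[X])

@[simp]
theorem coeff_mapLinear (i : ℕ) : (p.mapLinear φ).coeff i = φ (p.coeff i) := by
  simp only [mapLinear, finsetSum_coeff, coeff_monomial, Finset.sum_ite_eq']
  split_ifs with h
  · rfl
  · rw [notMem_support_iff.1 h, map_zero]

theorem eval_mapLinear (r : K) : (p.mapLinear φ).eval r = φ (p.eval (algebraMap K L r)) := by
  have hdeg : (p.mapLinear φ).natDegree < p.natDegree + 1 :=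
    Nat.lt_succ_of_le <| natDegree_le_iff_coeff_eq_zero.2 fun i hi => by
      simp [coeff_eq_zero_of_natDegree_lt hi]
  rw [eval_eq_sum_range' hdeg, eval_eq_sum_range, map_sum]
  refine Finset.sum_congr rfl fun i _ => ?_
  rw [← map_pow, ← Algebra.commutes, ← Algebra.smul_def, map_smul, coeff_mapLinear, smul_eq_mul,
    mul_comm]

end mapLinear

theorem eventually_eval_natCast_ne_zero [CommRing K] [IsDomain K] [CharZero K] {Q : K[X]}
    (hQ : Q ≠ 0) : ∀ᶠ n : ℕ in atTop, Q.eval (n : K) ≠ 0 := by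
  rw [← Nat.cofinite_eq_atTop]
  exact ((finite_setOfPred_isRoot hQ).preimage Nat.cast_injective.injOn).compl_mem_cofinite

end Polynomial

theorem descPochhammer_eval_mul_sub_natCast {R : Type*} [CommRing R] (m : ℕ) (x : R) :
    (descPochhammer R m).eval x * (x - m) = x * (descPochhammer R m).eval (x - 1) := by
  rw [← descPochhammer_succ_eval, descPochhammer_succ_left]
  simp

def IsEventuallyRational (K : Type*) [Field K] (u : ℕ → K) : Prop :=
  ∃ P Q : K[X], Q ≠ 0 ∧ ∀ᶠ n in atTop, u n = P.eval (n : K) / Q.eval (n : K)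

namespace IsEventuallyRational

variable {K : Type*} [Field K]

theorem of_eventually_mul_eq [CharZero K] {u : ℕ → K} {P Q : K[X]} (hQ : Q ≠ 0)
    (h : ∀ᶠ n in atTop, u n * Q.eval (n : K) = P.eval (n : K)) : IsEventuallyRational K u :=
  ⟨P, Q, hQ, by
    filter_upwards [h, eventually_eval_natCast_ne_zero hQ] with n hn hQn
    rw [← hn, mul_div_cancel_right₀ _ hQn]⟩

theorem one : IsEventuallyRational K 1 :=
  ⟨1, 1, one_ne_zero, by simp⟩

theorem mul {u v : ℕ → K} (hu : IsEventuallyRational K u) (hv : IsEventuallyRational K v) :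
    IsEventuallyRational K (u * v) := by
  obtain ⟨P, Q, hQ, hu⟩ := hu
  obtain ⟨P', Q', hQ', hv⟩ := hv
  refine ⟨P * P', Q * Q', mul_ne_zero hQ hQ', ?_⟩
  filter_upwards [hu, hv] with n hun hvn
  rw [Pi.mul_apply, hun, hvn, eval_mul, eval_mul, div_mul_div_comm]

theorem multiset_prod {ι : Type*} (s : Multiset ι) {u : ι → ℕ → K}
    (hu : ∀ i ∈ s, IsEventuallyRational K (u i)) :
    IsEventuallyRational K fun n => (s.map fun i => u i n).prod := by
  induction s using Multiset.induction with
  | empty => exact one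
  | cons a s ih =>
    simp only [Multiset.map_cons, Multiset.prod_cons]
    exact (hu a (Multiset.mem_cons_self a s)).mul
      (ih fun i hi => hu i (Multiset.mem_cons_of_mem hi))

theorem of_algebraMap [CharZero K] {L : Type*} [Field L] [Algebra K L] {u : ℕ → K}
    (h : IsEventuallyRational L fun n => algebraMap K L (u n)) : IsEventuallyRational K u := by
  obtain ⟨P, Q, hQ, hPQ⟩ := h
  obtain ⟨φ, hφ⟩ := Module.Projective.exists_dual_eq_one K (leadingCoeff_ne_zero.2 hQ)
  have hQφ : Q.mapLinear φ ≠ 0 := fun h0 => by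
    simpa [hφ] using congrArg (coeff · Q.natDegree) h0
  refine of_eventually_mul_eq (P := P.mapLinear φ) hQφ ?_
  have : CharZero L := charZero_of_injective_algebraMap (algebraMap K L).injective
  filter_upwards [hPQ, eventually_eval_natCast_ne_zero hQ] with n hn hQn
  rw [eq_div_iff hQn] at hn
  rw [eval_mapLinear, eval_mapLinear, map_natCast, ← hn, ← Algebra.smul_def, map_smul, smul_eq_mul]

end IsEventuallyRational

section Shift

variable {K : Type*} [Field K] {α : K} (hα : ∀ k : ℕ, 1 ≤ k → (k : K) ≠ α) (m : ℕ)
include hα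

theorem prod_Icc_sub_add_div_sub_mul_descPochhammer (n : ℕ) :
    (∏ k ∈ Icc 1 n, ((k : K) - (α + m)) / (k - α)) * (descPochhammer K m).eval (n - α) =
      (descPochhammer K m).eval (-α) := by
  induction n with
  | zero => simp
  | succ n ih =>
    have hn : ((n + 1 : ℕ) : K) - α ≠ 0 := sub_ne_zero.2 (hα (n + 1) (Nat.le_add_left 1 n))
    have hD := descPochhammer_eval_mul_sub_natCast m (((n + 1 : ℕ) : K) - α)
    rw [prod_Icc_succ_top (Nat.le_add_left 1 n), ← ih]
    push_cast at hn hD ⊢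
    rw [show (n : K) + 1 - α - 1 = n - α by ring] at hD
    field_simp
    linear_combination (∏ k ∈ Icc 1 n, ((k : K) - (α + m)) / (k - α)) * hD

theorem prod_Icc_sub_sub_div_sub_mul_descPochhammer (n : ℕ) :
    (∏ k ∈ Icc 1 n, ((k : K) - (α - m)) / (k - α)) * (descPochhammer K m).eval (m - α) =
      (descPochhammer K m).eval (n + m - α) := by
  induction n with
  | zero => simp
  | succ n ih =>
    have hn : ((n + 1 : ℕ) : K) - α ≠ 0 := sub_ne_zero.2 (hα (n + 1) (Nat.le_add_left 1 n))
    have hD := descPochhammer_eval_mul_sub_natCast m (((n + 1 : ℕ) : K) + m - α)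
    rw [prod_Icc_succ_top (Nat.le_add_left 1 n), mul_right_comm, ih]
    push_cast at hn hD ⊢
    rw [show (n : K) + 1 + m - α - 1 = n + m - α by ring] at hD
    field_simp
    linear_combination -hD

theorem descPochhammer_eval_natCast_sub_ne_zero :
    (descPochhammer K m).eval ((m : K) - α) ≠ 0 := by
  rw [descPochhammer_eval_eq_prod_range, prod_ne_zero_iff]
  intro j hj
  have hjm := mem_range.1 hj
  have := hα (m - j) (by omega)
  rw [Nat.cast_sub hjm.le] at this
  exact fun h => this (by linear_combination h)

end Shift

theorem isEventuallyRational_prod_Icc_sub_add_div_sub {K : Type*} [Field K] [CharZero K] {α : K}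
    (hα : ∀ k : ℕ, 1 ≤ k → (k : K) ≠ α) (c : ℤ) :
    IsEventuallyRational K fun n => ∏ k ∈ Icc 1 n, ((k : K) - (α + c)) / (k - α) := by
  obtain ⟨m, rfl | rfl⟩ := Int.eq_nat_or_neg c
  · refine .of_eventually_mul_eq (P := C ((descPochhammer K m).eval (-α)))
      ((monic_descPochhammer K m).comp_X_sub_C α).ne_zero (.of_forall fun n => ?_)
    simpa [eval_comp] using prod_Icc_sub_add_div_sub_mul_descPochhammer hα m n
  · refine .of_eventually_mul_eq (P := (descPochhammer K m).comp (X + C ((m : K) - α)))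
      (C_ne_zero.2 (descPochhammer_eval_natCast_sub_ne_zero hα m)) (.of_forall fun n => ?_)
    simpa [eval_comp, ← sub_eq_add_neg, add_sub_assoc] using
      prod_Icc_sub_sub_div_sub_mul_descPochhammer hα m n

theorem stmt11_general (f g : Polynomial ℤ) (hfm : f.Monic) (hgm : g.Monic)
    (hf : ∀ k : ℕ, f.eval (k : ℤ) ≠ 0)
    (T : Multiset (ℂ × ℤ))
    (hfr : f.aroots ℂ = T.map Prod.fst)
    (hgr : g.aroots ℂ = T.map (fun q => q.1 + (q.2 : ℂ))) :
    ∃ (n₀ : ℕ) (P Q : Polynomial ℚ), Q ≠ 0 ∧ ∀ n : ℕ, n₀ ≤ n →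
      (∏ k ∈ Finset.Icc 1 n, ((g.eval (k : ℤ) : ℤ) : ℚ) / ((f.eval (k : ℤ) : ℤ) : ℚ)) =
        P.eval (n : ℚ) / Q.eval (n : ℚ) := by
  have eval_eq_prod {p : ℤ[X]} (hp : p.Monic) (k : ℕ) :
      ((p.eval (k : ℤ) : ℤ) : ℂ) = ((p.aroots ℂ).map fun a => (k : ℂ) - a).prod := by
    rw [← (IsAlgClosed.splits _).aeval_eq_prod_aroots_of_monic hp, ← map_natCast (algebraMap ℤ ℂ),
      aeval_algebraMap_apply_eq_algebraMap_eval]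
    simp
  have hroot : ∀ q ∈ T, ∀ k : ℕ, (k : ℂ) ≠ q.1 := by
    intro q hq k hk
    have : ((f.eval (k : ℤ) : ℤ) : ℂ) = 0 := by
      rw [eval_eq_prod hfm, hfr, Multiset.map_map]
      exact Multiset.prod_eq_zero (Multiset.mem_map.2 ⟨q, hq, sub_eq_zero.2 hk⟩)
    exact hf k (by exact_mod_cast this)
  have hprod (n : ℕ) :
      ((∏ k ∈ Icc 1 n, ((g.eval (k : ℤ) : ℤ) : ℚ) / ((f.eval (k : ℤ) : ℤ) : ℚ) : ℚ) : ℂ) =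
        (T.map fun q => ∏ k ∈ Icc 1 n, ((k : ℂ) - (q.1 + q.2)) / (k - q.1)).prod := by
    push_cast
    simp_rw [eval_eq_prod hfm, eval_eq_prod hgm, hfr, hgr, Multiset.map_map, Function.comp_def,
      ← Multiset.prod_map_div, Finset.prod_eq_multiset_prod]
    exact Multiset.prod_map_prod_map _ _
  have hC : IsEventuallyRational ℂ fun n =>
      algebraMap ℚ ℂ (∏ k ∈ Icc 1 n, ((g.eval (k : ℤ) : ℤ) : ℚ) / ((f.eval (k : ℤ) : ℤ) : ℚ)) := by
    simp_rw [eq_ratCast, hprod]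
    exact .multiset_prod T fun q hq => isEventuallyRational_prod_Icc_sub_add_div_sub
      (fun k _ => hroot q hq k) q.2
  obtain ⟨P, Q, hQ, h⟩ := IsEventuallyRational.of_algebraMap hC
  obtain ⟨n₀, hn₀⟩ := eventually_atTop.1 h
  exact ⟨n₀, P, Q, hQ, hn₀⟩

/-- If the roots of monic `f, g ∈ ℤ[x]` of equal degree can be matched in a bijection
(encoded by the multiset `T` of pairs (root of f, integer shift)) so that corresponding
roots differ by a rational integer and have equal multiplicities, then the hypergeometric
product `∏_{k=1}^n g(k)/f(k)` is eventually given by a rational function of `n`. -/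
theorem stmt11 (f g : Polynomial ℤ) (hfm : f.Monic) (hgm : g.Monic)
    (hdeg : f.degree = g.degree)
    (hf : ∀ k : ℕ, f.eval (k : ℤ) ≠ 0) (hg : ∀ k : ℕ, 1 ≤ k → g.eval (k : ℤ) ≠ 0)
    (T : Multiset (ℂ × ℤ))
    (hfr : f.aroots ℂ = T.map Prod.fst)
    (hgr : g.aroots ℂ = T.map (fun q => q.1 + (q.2 : ℂ))) :
    ∃ (n₀ : ℕ) (P Q : Polynomial ℚ), Q ≠ 0 ∧ ∀ n : ℕ, n₀ ≤ n →
      (∏ k ∈ Finset.Icc 1 n, ((g.eval (k : ℤ) : ℤ) : ℚ) / ((f.eval (k : ℤ) : ℤ) : ℚ)) =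
        P.eval (n : ℚ) / Q.eval (n : ℚ) :=
  stmt11_general f g hfm hgm hf T hfr hgr
end

section
/- Let u_n be defined by u_0 = 1 and f(n)u_n = g(n)u_{n-1} with f(x) = (x²+1)(x²-2) and g(x) = x⁴ - 2x² + 9. Then v_7(u_n) = -v_7(∏_{k=1}^n f(k)) and in particular v_7(u_n) ≤ -(2n/6 - 10·log n/log 7) for all n ≥ 2; consequently, for any fixed t ∈ ℚ, u_n = t holds for only finitely many n. -/
/-!
Unrolling the recurrence gives `u n = ∏ g(k) / ∏ f(k)` over `1 ≤ k ≤ n`. Since `x⁴ - 2x² + 9` has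
no root modulo 7, the numerator is prime to 7 and `v₇(u n) = -v₇(∏ f(k))`. As `3² ≡ 2 (mod 7)`,
Hensel's lemma gives a square root `x` of 2 modulo every `7^j`, and `x ≠ -x`; so at least
`2⌊n/7^j⌋` of the numbers `k² - 2`, `1 ≤ k ≤ n`, are divisible by `7^j`. Summing over
`1 ≤ j ≤ log₇ n` gives `v₇(∏ f(k)) ≥ n/3 - O(log n)`; already the term `j = 1` shows
`v₇(u n) → -∞`, so each value is taken only finitely often.
-/

open Finset

instance Nat.fact_prime_seven : Fact (Nat.Prime 7) := ⟨by norm_num⟩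

theorem padicValInt.prod {p : ℕ} [Fact p.Prime] {ι : Type*} (s : Finset ι) {a : ι → ℤ}
    (ha : ∀ i ∈ s, a i ≠ 0) :
    padicValInt p (∏ i ∈ s, a i) = ∑ i ∈ s, padicValInt p (a i) := by
  classical
  induction s using Finset.induction_on with
  | empty => simp
  | insert i s hi ih =>
    have hs : ∀ j ∈ s, a j ≠ 0 := fun j hj => ha j (mem_insert_of_mem hj)
    rw [prod_insert hi, sum_insert hi,
      padicValInt.mul (ha i (mem_insert_self i s)) (prod_ne_zero_iff.2 hs), ih hs]

theorem sum_card_filter_pow_dvd_le_padicValInt_prod {p : ℕ} [Fact p.Prime] {ι : Type*}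
    (s : Finset ι) {a : ι → ℤ} (ha : ∀ i ∈ s, a i ≠ 0) (J : ℕ) :
    ∑ j ∈ Icc 1 J, #{i ∈ s | (p : ℤ) ^ j ∣ a i} ≤ padicValInt p (∏ i ∈ s, a i) := by
  classical
  have hswap : ∑ j ∈ Icc 1 J, #{i ∈ s | (p : ℤ) ^ j ∣ a i} =
      ∑ i ∈ s, #{j ∈ Icc 1 J | (p : ℤ) ^ j ∣ a i} := by
    simp only [card_filter]
    exact sum_comm
  rw [hswap, padicValInt.prod s ha]
  refine sum_le_sum fun i hi => ?_
  calc #{j ∈ Icc 1 J | (p : ℤ) ^ j ∣ a i} ≤ #(Icc 1 (padicValInt p (a i))) := by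
        refine card_le_card fun j hj => ?_
        rw [mem_filter, mem_Icc] at hj
        rw [mem_Icc]
        exact ⟨hj.1.1, ((padicValInt_dvd_iff j (a i)).1 hj.2).resolve_left (ha i hi)⟩
    _ = padicValInt p (a i) := by simp

section Hypergeometric

variable {u : ℕ → ℚ} {F G : ℕ → ℤ}

theorem eq_prod_div_prod_of_mul_eq_mul (hF : ∀ k, F k ≠ 0) (hu0 : u 0 = 1)
    (hrec : ∀ n, 1 ≤ n → (F n : ℚ) * u n = G n * u (n - 1)) (n : ℕ) :
    u n = ((∏ k ∈ Icc 1 n, G k : ℤ) : ℚ) / ((∏ k ∈ Icc 1 n, F k : ℤ) : ℚ) := by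
  induction n with
  | zero => simp [hu0]
  | succ n ih =>
    have hFn : (F (n + 1) : ℚ) ≠ 0 := Int.cast_ne_zero.2 (hF (n + 1))
    have hstep := hrec (n + 1) (by omega)
    rw [Nat.add_sub_cancel] at hstep
    rw [prod_Icc_succ_top (by omega), prod_Icc_succ_top (by omega), Int.cast_mul, Int.cast_mul,
      mul_div_mul_comm, ← ih, mul_div_assoc', eq_div_iff hFn]
    linear_combination hstep

theorem padicValRat_eq_neg_padicValInt_prod_of_mul_eq_mul {p : ℕ} [Fact p.Prime]
    (hF : ∀ k, F k ≠ 0) (hG : ∀ k, ¬(p : ℤ) ∣ G k) (hu0 : u 0 = 1)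
    (hrec : ∀ n, 1 ≤ n → (F n : ℚ) * u n = G n * u (n - 1)) (n : ℕ) :
    padicValRat p (u n) = -padicValInt p (∏ k ∈ Icc 1 n, F k) := by
  have hG0 : ∀ k, G k ≠ 0 := fun k h => hG k (h ▸ dvd_zero _)
  have hvG : padicValInt p (∏ k ∈ Icc 1 n, G k) = 0 := by
    rw [padicValInt.prod _ fun k _ => hG0 k]
    exact sum_eq_zero fun k _ => padicValInt.eq_zero_of_not_dvd (hG k)
  rw [eq_prod_div_prod_of_mul_eq_mul hF hu0 hrec n,
    padicValRat.div (Int.cast_ne_zero.2 (prod_ne_zero_iff.2 fun k _ => hG0 k))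
      (Int.cast_ne_zero.2 (prod_ne_zero_iff.2 fun k _ => hF k)),
    padicValRat.of_int, padicValRat.of_int, hvG]
  simp

end Hypergeometric

theorem Int.sq_sub_two_ne_zero (x : ℤ) : x ^ 2 - 2 ≠ 0 := fun h =>
  Int.sq_ne_two_mod_four x (by rw [← sq, sub_eq_zero.1 h]; rfl)

theorem Int.not_seven_dvd_pow_four_sub_two_mul_sq_add_nine (x : ℤ) :
    ¬(7 : ℤ) ∣ x ^ 4 - 2 * x ^ 2 + 9 := by
  intro h
  have h7 := (ZMod.intCast_zmod_eq_zero_iff_dvd _ 7).2 h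
  push_cast at h7
  revert h7
  generalize (x : ZMod 7) = y
  revert y
  decide

theorem div_le_card_filter_natCast_eq {m : ℕ} [NeZero m] (n : ℕ) (x : ZMod m) :
    n / m ≤ #{k ∈ Icc 1 n | ((k : ℕ) : ZMod m) = x} := by
  calc n / m ≤ Nat.count (· ≡ (x - 1).val [MOD m]) n := by
        rw [Nat.count_modEq_card n (Nat.pos_of_neZero m)]
        exact Nat.le_add_right _ _
    _ = #{k ∈ range n | k ≡ (x - 1).val [MOD m]} := Nat.count_eq_card_filter_range _ _
    _ ≤ #{k ∈ Icc 1 n | ((k : ℕ) : ZMod m) = x} := by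
        refine card_le_card_of_injOn (· + 1) (fun k hk => ?_)
          (fun _ _ _ _ h => add_right_cancel h)
        simp only [coe_filter, Set.mem_ofPred_eq, mem_range, mem_Icc] at hk ⊢
        refine ⟨⟨by omega, by omega⟩, ?_⟩
        rw [Nat.cast_succ, (ZMod.natCast_eq_natCast_iff _ _ _).2 hk.2, ZMod.natCast_zmod_val,
          sub_add_cancel]

theorem two_mul_div_le_card_filter_sq_eq {m : ℕ} [NeZero m] (n : ℕ) {x : ZMod m} (hx : x ≠ -x) :
    2 * (n / m) ≤ #{k ∈ Icc 1 n | ((k : ℕ) : ZMod m) ^ 2 = x ^ 2} := by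
  have hdisj : Disjoint {k ∈ Icc 1 n | ((k : ℕ) : ZMod m) = x}
      {k ∈ Icc 1 n | ((k : ℕ) : ZMod m) = -x} :=
    disjoint_filter.2 fun _ _ h h' => hx (h.symm.trans h')
  calc 2 * (n / m)
      ≤ #{k ∈ Icc 1 n | ((k : ℕ) : ZMod m) = x} + #{k ∈ Icc 1 n | ((k : ℕ) : ZMod m) = -x} := by
        linarith [div_le_card_filter_natCast_eq n x, div_le_card_filter_natCast_eq n (-x)]
    _ = #{k ∈ Icc 1 n | ((k : ℕ) : ZMod m) = x ∨ ((k : ℕ) : ZMod m) = -x} := by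
        rw [filter_or, card_union_of_disjoint hdisj]
    _ ≤ #{k ∈ Icc 1 n | ((k : ℕ) : ZMod m) ^ 2 = x ^ 2} :=
        card_le_card <| monotone_filter_right _ fun k _ hk => by rcases hk with h | h <;> simp [h]

open Polynomial in
theorem PadicInt.exists_sq_eq_two : ∃ z : ℤ_[7], z ^ 2 = 2 := by
  have h7 : ‖(7 : ℤ_[7])‖ < 1 := by simpa using PadicInt.norm_natCast_lt_one_iff (p := 7) (n := 7)
  have h6 : ‖(6 : ℤ_[7])‖ = 1 := by
    simpa using (PadicInt.norm_natCast_eq_one_iff (p := 7) (n := 6)).2 (by norm_num)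
  obtain ⟨z, hz, -⟩ := hensels_lemma (p := 7) (F := (X ^ 2 - 2 : ℤ[X])) (a := 3) (by
    simpa [aeval_def, h6] using h7)
  exact ⟨z, by simpa [aeval_def, sub_eq_zero] using hz⟩

theorem two_mul_div_le_card_filter_dvd_sq_sub_two (n : ℕ) {j : ℕ} (hj : 1 ≤ j) :
    2 * (n / 7 ^ j) ≤ #{k ∈ Icc 1 n | (7 : ℤ) ^ j ∣ ((k : ℕ) : ℤ) ^ 2 - 2} := by
  obtain ⟨z, hz⟩ := PadicInt.exists_sq_eq_two
  set x := PadicInt.toZModPow j z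
  have hx : x ^ 2 = 2 := by rw [← map_pow, hz, map_ofNat]
  have hxx : x ≠ -x := by
    intro h
    have h4 : ((4 : ℕ) : ZMod (7 ^ j)) = 0 := by push_cast; linear_combination x * h - 2 * hx
    have h74 : 7 ∣ 4 := (dvd_pow_self 7 (by omega)).trans ((ZMod.natCast_eq_zero_iff _ _).1 h4)
    norm_num at h74
  convert two_mul_div_le_card_filter_sq_eq n hxx using 3 with k
  have h := ZMod.intCast_zmod_eq_zero_iff_dvd ((k : ℤ) ^ 2 - 2) (7 ^ j)
  push_cast at h
  rw [hx, ← h, sub_eq_zero]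

theorem sum_two_mul_div_le_padicValInt_prod (n J : ℕ) :
    ∑ j ∈ Icc 1 J, 2 * (n / 7 ^ j) ≤
      padicValInt 7 (∏ k ∈ Icc 1 n, ((k : ℤ) ^ 2 + 1) * ((k : ℤ) ^ 2 - 2)) := by
  refine (sum_le_sum fun j hj => ?_).trans
    (sum_card_filter_pow_dvd_le_padicValInt_prod _ (fun k _ => ?_) J)
  · refine (two_mul_div_le_card_filter_dvd_sq_sub_two n (mem_Icc.1 hj).1).trans
      (card_le_card (monotone_filter_right _ fun k _ h => ?_))
    exact_mod_cast dvd_mul_of_dvd_right h _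
  · exact mul_ne_zero (by positivity) (Int.sq_sub_two_ne_zero k)

theorem sub_le_sum_div_pow (p n J : ℕ) (hp : 1 < p) :
    n / (p - 1 : ℝ) - n / ((p - 1) * p ^ J) - J ≤ ∑ j ∈ Icc 1 J, ((n / p ^ j : ℕ) : ℝ) := by
  have hp1 : (0 : ℝ) < p - 1 := by
    rw [sub_pos]; exact_mod_cast hp
  induction J with
  | zero => simp
  | succ J ih =>
    have hfloor : (n : ℝ) / p ^ (J + 1) < ((n / p ^ (J + 1) : ℕ) : ℝ) + 1 := by
      rw [← Nat.floor_div_eq_div (K := ℝ)]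
      push_cast
      exact Nat.lt_floor_add_one _
    have hgeom : (n : ℝ) / ((p - 1) * p ^ J) - n / ((p - 1) * p ^ (J + 1)) = n / p ^ (J + 1) := by
      have hp0 : (p : ℝ) ≠ 0 := by positivity
      field_simp
      ring
    rw [sum_Icc_succ_top (by omega)]
    push_cast
    linarith

theorem sub_log_le_sum_two_mul_div (n : ℕ) (hn : 2 ≤ n) :
    2 * (n : ℝ) / 6 - 10 * Real.log n / Real.log 7 ≤
      ((∑ j ∈ Icc 1 (Nat.log 7 n), 2 * (n / 7 ^ j) : ℕ) : ℝ) := by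
  set J := Nat.log 7 n
  set L := Real.log n / Real.log 7
  have hsum := sub_le_sum_div_pow 7 n J (by norm_num)
  have hlog7 : 0 < Real.log 7 := Real.log_pos (by norm_num)
  have hJ : (J : ℝ) ≤ L := by
    simpa [L, Real.log_div_log] using Real.natLog_le_logb n 7
  have hL : 1 / 3 ≤ L := by
    have h8 : Real.log 7 ≤ Real.log (2 ^ 3) := Real.log_le_log (by norm_num) (by norm_num)
    have h2 : Real.log 2 ≤ Real.log n := Real.log_le_log (by norm_num) (by exact_mod_cast hn)
    rw [Real.log_pow] at h8
    rw [le_div_iff₀ hlog7]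
    push_cast at h8
    linarith
  norm_num at hsum
  have hlt : (n : ℝ) / (6 * 7 ^ J) ≤ 7 / 6 := by
    have : (n : ℝ) < 7 ^ (J + 1) := by exact_mod_cast Nat.lt_pow_succ_log_self (by norm_num) n
    rw [div_le_iff₀ (by positivity)]
    rw [pow_succ] at this
    linarith
  have h10 : 10 * Real.log n / Real.log 7 = 10 * L := mul_div_assoc _ _ _
  push_cast
  rw [← mul_sum, h10]
  linarith

/-- For the hypergeometric sequence with `f(x) = (x²+1)(x²-2)` and `g(x) = x⁴-2x²+9`:
`v_7(u_n) = -v_7(∏_{k=1}^n f(k))`, in particular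
`v_7(u_n) ≤ -(2n/6 - 10·log n/log 7)` for `n ≥ 2`, and consequently `u` takes any fixed
rational value only finitely often. -/
theorem stmt18 (u : ℕ → ℚ) (hu0 : u 0 = 1)
    (hrec : ∀ n : ℕ, 1 ≤ n →
      (((n : ℚ) ^ 2 + 1) * ((n : ℚ) ^ 2 - 2)) * u n =
        ((n : ℚ) ^ 4 - 2 * (n : ℚ) ^ 2 + 9) * u (n - 1)) :
    (∀ n : ℕ, padicValRat 7 (u n) =
      -(padicValInt 7 (∏ k ∈ Finset.Icc 1 n, ((k : ℤ) ^ 2 + 1) * ((k : ℤ) ^ 2 - 2)) : ℤ)) ∧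
    (∀ n : ℕ, 2 ≤ n → (padicValRat 7 (u n) : ℝ) ≤
      -(2 * (n : ℝ) / 6 - 10 * Real.log n / Real.log 7)) ∧
    (∀ t : ℚ, {n : ℕ | u n = t}.Finite) := by
  have hval : ∀ n : ℕ, padicValRat 7 (u n) =
      -(padicValInt 7 (∏ k ∈ Icc 1 n, ((k : ℤ) ^ 2 + 1) * ((k : ℤ) ^ 2 - 2)) : ℤ) :=
    padicValRat_eq_neg_padicValInt_prod_of_mul_eq_mul
      (F := fun k => ((k : ℤ) ^ 2 + 1) * ((k : ℤ) ^ 2 - 2))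
      (G := fun k => (k : ℤ) ^ 4 - 2 * (k : ℤ) ^ 2 + 9)
      (fun k => mul_ne_zero (by positivity) (Int.sq_sub_two_ne_zero k))
      (fun k => Int.not_seven_dvd_pow_four_sub_two_mul_sq_add_nine k) hu0
      (fun n hn => by push_cast; exact hrec n hn)
  refine ⟨hval, fun n hn => ?_, fun t => ?_⟩
  · have hlow : ((∑ j ∈ Icc 1 (Nat.log 7 n), 2 * (n / 7 ^ j) : ℕ) : ℝ) ≤
        padicValInt 7 (∏ k ∈ Icc 1 n, ((k : ℤ) ^ 2 + 1) * ((k : ℤ) ^ 2 - 2)) := by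
      exact_mod_cast sum_two_mul_div_le_padicValInt_prod n _
    rw [hval n]
    push_cast
    linarith [sub_log_le_sum_two_mul_div n hn]
  · refine (Set.finite_lt_nat (7 * ((-padicValRat 7 t).toNat + 1))).subset fun n hn => ?_
    have hlow := sum_two_mul_div_le_padicValInt_prod n 1
    rw [Icc_self, sum_singleton, pow_one] at hlow
    have ht := hval n
    rw [Set.mem_ofPred_eq.mp hn] at ht
    show n < _
    omega
end
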